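/- arXiv:2309.09790 — 5 statements merged into one kernel-verified Lean document; each statement's English description precedes it below -/
import Mathlib

section
/- Let α, β be finite signed measures on (S, F), (T, G), dominated respectively by σ-finite positive measures μ, ν. Then the product signed measure α × β is dominated by μ × ν, and its Radon–Nikodym derivative with respect to μ × ν equals (s,t) ↦ (dα/dμ)(s)·(dβ/dν)(t) (μ × ν)-almost everywhere. -/
/-!
By Fubini, the density `(s, t) ↦ (dα/dμ)(s) (dβ/dν)(t)` gives every measurable rectangle `A × B`
the mass `α(A) β(B)`, so its `withDensityᵥ` measure is the product signed measure `α × β`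
(signed measures agreeing on the rectangles agree). The claim is then the uniqueness of the
Radon–Nikodym derivative of a measure with integrable density.
-/

open MeasureTheory

namespace MeasureTheory

variable {X Y : Type*} [MeasurableSpace X] [MeasurableSpace Y] {μ : Measure X} {ν : Measure Y}

theorem SignedMeasure.rnDeriv_withDensityᵥ {f : X → ℝ} (hf : Integrable f μ) :
    SignedMeasure.rnDeriv (μ.withDensityᵥ f) μ =ᵐ[μ] f :=
  (eq_rnDeriv 0 f hf .zero_left (zero_add _).symm).symm

theorem Measure.withDensityᵥ_mul_prod [SFinite μ] [SFinite ν] {𝕜 : Type*} [RCLike 𝕜]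
    {f : X → 𝕜} {g : Y → 𝕜} (hf : Integrable f μ) (hg : Integrable g ν) :
    (μ.prod ν).withDensityᵥ (fun p => f p.1 * g p.2) =
      (μ.withDensityᵥ f).prod (ν.withDensityᵥ g) (ContinuousLinearMap.mul ℝ 𝕜) := by
  refine (VectorMeasure.prod_eq_of_forall_apply_prod fun s t hs ht => ?_).symm
  rw [withDensityᵥ_apply (hf.mul_prod hg) (hs.prod ht), withDensityᵥ_apply hf hs,
    withDensityᵥ_apply hg ht, setIntegral_prod_mul, ContinuousLinearMap.mul_apply']

end MeasureTheory

theorem product_signedMeasure_rnDeriv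
    {S T : Type*} [MeasurableSpace S] [MeasurableSpace T]
    (α : SignedMeasure S) (β : SignedMeasure T)
    (μ : Measure S) (ν : Measure T) [SigmaFinite μ] [SigmaFinite ν]
    (hα : α ≪ᵥ μ.toENNRealVectorMeasure) (hβ : β ≪ᵥ ν.toENNRealVectorMeasure)
    (ω : SignedMeasure (S × T))
    (hω : ∀ A B, MeasurableSet A → MeasurableSet B →
      ω (A ×ˢ B) = α A * β B) :
    ω ≪ᵥ (μ.prod ν).toENNRealVectorMeasure ∧
      ω.rnDeriv (μ.prod ν) =ᵐ[μ.prod ν]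
        fun p => α.rnDeriv μ p.1 * β.rnDeriv ν p.2 := by
  have hdα := α.integrable_rnDeriv μ
  have hdβ := β.integrable_rnDeriv ν
  have hω_eq : ω = (μ.prod ν).withDensityᵥ fun p => α.rnDeriv μ p.1 * β.rnDeriv ν p.2 := by
    rw [Measure.withDensityᵥ_mul_prod hdα hdβ, α.withDensityᵥ_rnDeriv_eq μ hα,
      β.withDensityᵥ_rnDeriv_eq ν hβ]
    exact (VectorMeasure.prod_eq_of_forall_apply_prod hω).symm
  rw [hω_eq]
  exact ⟨Measure.withDensityᵥ_absolutelyContinuous _ _,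
    SignedMeasure.rnDeriv_withDensityᵥ (hdα.mul_prod hdβ)⟩
end

section
/- Let α be an n-dimensional finite signed vector measure on (S, F) and μ a σ-finite positive measure dominating α. For x* ∈ ℝⁿ let D≥ := {s : ⟨x*, (dα/dμ)(s)⟩ ≥ 0}. Then sup {⟨x*, α(A)⟩ : A ∈ F} = ⟨x*, α(D≥)⟩. -/
open MeasureTheory

theorem sSup_inner_range_eq_inner_apply_nonneg_set
    {n : ℕ} {S : Type*} [MeasurableSpace S]
    (α : Fin n → SignedMeasure S)
    (μ : Measure S) [SigmaFinite μ]
    (f : S → Fin n → ℝ) (hfmeas : Measurable f)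
    (hfint : ∀ i, Integrable (fun s => f s i) μ)
    (hrn : ∀ i (A : Set S), MeasurableSet A → α i A = ∫ s in A, f s i ∂μ)
    (xstar : Fin n → ℝ) :
    sSup {r : ℝ | ∃ A : Set S, MeasurableSet A ∧ r = ∑ i, xstar i * α i A}
      = ∑ i, xstar i * α i {s | 0 ≤ ∑ j, xstar j * f s j} := by
  set g : S → ℝ := fun s => ∑ j, xstar j * f s j with hg
  have hgmeas : Measurable g := by
    apply Finset.measurable_sum
    intro j _
    exact ((measurable_pi_apply j).comp hfmeas).const_mul _
  have hgint : Integrable g μ := by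
    apply integrable_finset_sum
    intro j _
    exact (hfint j).const_mul _
  set D : Set S := {s | 0 ≤ g s} with hD
  have hDmeas : MeasurableSet D := measurableSet_le measurable_const hgmeas
  have key : ∀ A : Set S, MeasurableSet A →
      ∑ i, xstar i * α i A = ∫ s in A, g s ∂μ := by
    intro A hA
    rw [integral_finset_sum]
    · refine Finset.sum_congr rfl fun i _ => ?_
      rw [hrn i A hA, ← integral_const_mul]
    · intro j _
      exact ((hfint j).restrict).const_mul _
  have hub : ∀ A : Set S, MeasurableSet A →
      ∫ s in A, g s ∂μ ≤ ∫ s in D, g s ∂μ := by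
    intro A hA
    have hsplit : ∫ s in A ∩ D, g s ∂μ + ∫ s in A \ D, g s ∂μ = ∫ s in A, g s ∂μ :=
      integral_inter_add_diff hDmeas hgint.integrableOn
    have h1 : ∫ s in A \ D, g s ∂μ ≤ 0 := by
      apply setIntegral_nonpos (hA.diff hDmeas)
      intro s hs
      exact le_of_not_ge hs.2
    have h2 : ∫ s in A ∩ D, g s ∂μ ≤ ∫ s in D, g s ∂μ := by
      apply setIntegral_mono_set hgint.integrableOn
      · filter_upwards [ae_restrict_mem hDmeas] with s hs using hs
      · exact Filter.Eventually.of_forall fun s hs => hs.2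
    linarith
  have hmem : (∑ i, xstar i * α i D) ∈
      {r : ℝ | ∃ A : Set S, MeasurableSet A ∧ r = ∑ i, xstar i * α i A} :=
    ⟨D, hDmeas, rfl⟩
  refine IsGreatest.csSup_eq ⟨hmem, ?_⟩
  rintro r ⟨A, hA, rfl⟩
  rw [key A hA, key D hDmeas]
  exact hub A hA
end

section
/- (Inclusion-preservation of the Lorenz product) Let α, α', β, β' be n-dimensional finite signed vector measures, possibly on different measurable spaces. If LH(α) ⊆ LH(α') and LH(β) ⊆ LH(β'), then LH(α × β) ⊆ LH(α' × β'), where α × β denotes the n-dimensional vector measure whose i-th coordinate is the product measure αᵢ × βᵢ. -/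
/-!
Represent `γ` by a density `q : Ω → ℝⁿ` with respect to a finite measure `ρ`. For a functional
`L`, the supremum of `L (γ A)` over measurable `A` is `∫ (L ∘ q)⁺ dρ`, attained at `{0 < L ∘ q}`.
This integral is therefore the support function of `LH(γ)`, and since `LH(γ)` is closed, a point
lies in `LH(γ)` as soon as it satisfies all the support inequalities. If `α`, `β` have densities
`g`, `k` with respect to `μ`, `ν`, then `α × β` has density `(s, t) ↦ g s * k t`; by Fubini its support function at `L` is the `ν`-integral over `t` of
the support function of `α` at `L (· * k t)`. So `LH(α) ⊆ LH(α')` allows replacing `α` by `α'`,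
and symmetrically `β` by `β'`.
-/

open MeasureTheory

/-- The Lorenz hull of an `n`-dimensional finite signed vector measure:
the convex hull of its range in `ℝⁿ`. -/
def lorenzHull {n : ℕ} {S : Type*} [MeasurableSpace S]
    (α : Fin n → MeasureTheory.SignedMeasure S) : Set (Fin n → ℝ) :=
  convexHull ℝ {x | ∃ A : Set S, MeasurableSet A ∧ x = fun i => α i A}

open Filter Topology Pointwise

section Separation

variable {E : Type*} [NormedAddCommGroup E] [NormedSpace ℝ E]

theorem Convex.exists_forall_le_exists_lt_of_interior_nonempty {C : Set E} (hC : Convex ℝ C)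
    (hint : (interior C).Nonempty) {x : E} (hx : x ∉ C) :
    ∃ f : StrongDual ℝ E, (∀ y ∈ C, f y ≤ f x) ∧ ∃ y ∈ C, f y < f x := by
  obtain ⟨f, hf⟩ := geometric_hahn_banach_open_point hC.interior isOpen_interior
    fun h => hx (interior_subset h)
  refine ⟨f, fun y hy => ?_, hint.some, interior_subset hint.some_mem, hf _ hint.some_mem⟩
  have hcl : closure (interior C) ⊆ {y | f y ≤ f x} :=
    closure_minimal (fun y hy => (hf y hy).le) (isClosed_le f.continuous continuous_const)
  rw [hC.closure_interior_eq_closure_of_nonempty_interior hint] at hcl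
  exact hcl (subset_closure hy)

/-- Inside `span C` the set `C` has nonempty interior; outside it, any functional that
annihilates `C` and is positive at `x` works. -/
theorem Convex.exists_forall_le_exists_lt_of_notMem [FiniteDimensional ℝ E] {C : Set E}
    (hC : Convex ℝ C) (h0 : 0 ∈ C) {x : E} (hx : x ∉ C) :
    ∃ f : StrongDual ℝ E, (∀ y ∈ C, f y ≤ f x) ∧ ∃ y ∈ C, f y < f x := by
  set V := Submodule.span ℝ C
  by_cases hxV : x ∈ V
  swap
  · obtain ⟨f, hfx, hVf⟩ := V.exists_le_ker_of_notMem hxV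
    set g := LinearMap.toContinuousLinearMap ((f x)⁻¹ • f)
    have hg : ∀ y ∈ C, g y = 0 := fun y hy => by
      simp [g, LinearMap.mem_ker.mp (hVf (Submodule.subset_span hy))]
    have hgx : g x = 1 := by simp [g, hfx]
    exact ⟨g, fun y hy => by simp [hg y hy, hgx], 0, h0, by simp [hg 0 h0, hgx]⟩
  set C' : Set V := V.subtype ⁻¹' C
  have hint : (interior C').Nonempty := by
    refine ((hC.linear_preimage V.subtype).interior_nonempty_iff_affineSpan_eq_top).mpr ?_
    rw [AffineSubspace.affineSpan_eq_top_iff_vectorSpan_eq_top_of_nonempty ℝ V V ⟨0, h0⟩,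
      vectorSpan_eq_span_vsub_set_right ℝ (show (0 : V) ∈ C' from h0)]
    simp only [vsub_eq_sub, sub_zero, Set.image_id']
    exact Submodule.span_span_coe_preimage
  obtain ⟨f, hle, y, hy, hlt⟩ :=
    (hC.linear_preimage V.subtype).exists_forall_le_exists_lt_of_interior_nonempty hint
      (x := ⟨x, hxV⟩) hx
  obtain ⟨g, hg, -⟩ := exists_extension_norm_eq V f
  refine ⟨g, fun z hz => ?_, y, hy, by rwa [hg, ← Subtype.coe_mk x hxV, hg]⟩
  have := hle ⟨z, Submodule.subset_span hz⟩ hz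
  rwa [← hg, ← hg] at this

end Separation

section PositivePart

variable {Ω : Type*} [MeasurableSpace Ω] {ρ : Measure Ω} {F G : Ω → ℝ}

theorem integral_max_zero_eq_setIntegral_pos (hF : Measurable F) :
    ∫ s, max (F s) 0 ∂ρ = ∫ s in {s | 0 < F s}, F s ∂ρ := by
  rw [← integral_indicator (measurableSet_lt measurable_const hF)]
  congr 1 with s
  by_cases hs : 0 < F s
  · simp [hs, hs.le]
  · simp [hs, not_lt.mp hs]

theorem setIntegral_le_integral_max_zero (hF : Integrable F ρ) (A : Set Ω) :
    ∫ s in A, F s ∂ρ ≤ ∫ s, max (F s) 0 ∂ρ :=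
  (setIntegral_mono hF.integrableOn hF.pos_part.integrableOn fun _ => le_max_left _ _).trans
    (setIntegral_le_integral hF.pos_part (ae_of_all _ fun _ => le_max_right _ _))

theorem tendsto_integral_max_mul_add_sub (hFm : Measurable F) (hF : Integrable F ρ)
    (hG : Integrable G ρ) :
    Tendsto (fun N : ℕ => ∫ s, max (N * F s + G s) 0 ∂ρ - N * ∫ s, max (F s) 0 ∂ρ) atTop
      (𝓝 (∫ s in {s | 0 < F s}, G s ∂ρ + ∫ s in {s | F s = 0}, max (G s) 0 ∂ρ)) := by
  have hP : MeasurableSet {s | 0 < F s} := measurableSet_lt measurable_const hFm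
  have hW : MeasurableSet {s | F s = 0} := hFm (measurableSet_singleton 0)
  have hint : ∀ N : ℕ, Integrable (fun s => max (N * F s + G s) 0) ρ := fun N =>
    ((hF.const_mul N).add hG).pos_part
  have hseq : ∀ N : ℕ, ∫ s, max (N * F s + G s) 0 ∂ρ - N * ∫ s, max (F s) 0 ∂ρ =
      ∫ s, (max (N * F s + G s) 0 - N * max (F s) 0) ∂ρ := fun N => by
    rw [integral_sub (hint N) (hF.pos_part.const_mul _), integral_const_mul]
  have hlim : ∫ s in {s | 0 < F s}, G s ∂ρ + ∫ s in {s | F s = 0}, max (G s) 0 ∂ρ =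
      ∫ s, ({s | 0 < F s}.indicator G s + {s | F s = 0}.indicator (fun s => max (G s) 0) s) ∂ρ := by
    rw [integral_add ((integrable_indicator_iff hP).mpr hG.integrableOn)
      ((integrable_indicator_iff hW).mpr hG.pos_part.integrableOn),
      integral_indicator hP, integral_indicator hW]
  simp_rw [hseq, hlim]
  refine tendsto_integral_of_dominated_convergence (fun s => |G s|)
    (fun N => ((hint N).sub (hF.pos_part.const_mul _)).aestronglyMeasurable) hG.abs
    (fun N => ae_of_all _ fun s => ?_) (ae_of_all _ fun s => ?_)
  · rw [Real.norm_eq_abs, abs_le]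
    have hN : (0 : ℝ) ≤ N := N.cast_nonneg
    have := le_abs_self (G s)
    have := neg_abs_le (G s)
    rcases lt_trichotomy (F s) 0 with h | h | h
    · have : N * F s ≤ 0 := mul_nonpos_of_nonneg_of_nonpos hN h.le
      constructor <;> simp only [max_def] <;> split_ifs <;> linarith
    · constructor <;> simp only [max_def, h] <;> split_ifs <;> linarith
    · have : 0 ≤ N * F s := mul_nonneg hN h.le
      constructor <;> simp only [max_def] <;> split_ifs <;> linarith
  · refine tendsto_const_nhds.congr' ?_
    rcases lt_trichotomy (F s) 0 with h | h | h
    · have hbot := (tendsto_natCast_atTop_atTop (R := ℝ)).atTop_mul_const_of_neg h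
      filter_upwards [hbot.eventually_le_atBot (-G s)] with N hN
      have hsP : s ∉ {s | 0 < F s} := fun h' => lt_asymm h h'
      have hsW : s ∉ {s | F s = 0} := fun h' => h.ne h'
      simp [Set.indicator_of_notMem hsP, Set.indicator_of_notMem hsW, max_eq_right h.le,
        max_eq_right (show N * F s + G s ≤ 0 by linarith)]
    · filter_upwards with N
      simp [h]
    · have htop := (tendsto_natCast_atTop_atTop (R := ℝ)).atTop_mul_const h
      filter_upwards [htop.eventually_ge_atTop (-G s)] with N hN
      have hsW : s ∉ {s | F s = 0} := fun h' => h.ne' h'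
      simp [Set.indicator_of_notMem hsW, h, max_eq_left h.le,
        max_eq_left (show 0 ≤ N * F s + G s by linarith)]

end PositivePart

section LorenzHull

variable {n : ℕ} {Ω : Type*} [MeasurableSpace Ω]

def vectorRange (γ : Fin n → SignedMeasure Ω) : Set (Fin n → ℝ) :=
  {x | ∃ A : Set Ω, MeasurableSet A ∧ x = fun i => γ i A}

theorem zero_mem_lorenzHull (γ : Fin n → SignedMeasure Ω) : 0 ∈ lorenzHull γ :=
  subset_convexHull ℝ _ ⟨∅, .empty, by simp [funext_iff]⟩

theorem lorenzHull_restrict_vadd_subset (γ : Fin n → SignedMeasure Ω) {P W : Set Ω}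
    (hP : MeasurableSet P) (hW : MeasurableSet W) (hPW : Disjoint P W) :
    (fun i => γ i P) +ᵥ lorenzHull (fun i => (γ i).restrict W) ⊆ lorenzHull γ := by
  rw [lorenzHull, ← convexHull_vadd]
  refine convexHull_mono ?_
  rintro _ ⟨_, ⟨A, hA, rfl⟩, rfl⟩
  refine ⟨P ∪ (A ∩ W), hP.union (hA.inter hW), funext fun i => ?_⟩
  rw [(γ i).of_union (hPW.mono_right Set.inter_subset_right) hP (hA.inter hW),
    ← VectorMeasure.restrict_apply _ hW hA]
  rfl

/-- For a density `q` of `γ` with respect to `ρ`, this is the support function of `lorenzHull γ`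
(see `HasDensity.map_posSet_eq_supportFun` and `HasDensity.mem_lorenzHull`). -/
noncomputable def supportFun {E : Type*} [NormedAddCommGroup E] [NormedSpace ℝ E]
    (ρ : Measure Ω) (q : Ω → E) (L : StrongDual ℝ E) : ℝ :=
  ∫ s, max (L (q s)) 0 ∂ρ

theorem supportFun_indicator {E : Type*} [NormedAddCommGroup E] [NormedSpace ℝ E]
    (ρ : Measure Ω) (q : Ω → E) (L : StrongDual ℝ E) {W : Set Ω} (hW : MeasurableSet W) :
    supportFun ρ (W.indicator q) L = ∫ s in W, max (L (q s)) 0 ∂ρ := by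
  rw [supportFun, ← integral_indicator hW]
  congr 1 with s
  by_cases hs : s ∈ W <;> simp [hs]

structure HasDensity (γ : Fin n → SignedMeasure Ω) (ρ : Measure Ω) (q : Ω → Fin n → ℝ) :
    Prop where
  measurable : Measurable q
  integrable : Integrable q ρ
  apply_eq : ∀ i A, MeasurableSet A → γ i A = ∫ s in A, q s i ∂ρ

theorem exists_hasDensity (γ : Fin n → SignedMeasure Ω) :
    ∃ (ρ : Measure Ω) (q : Ω → Fin n → ℝ), IsFiniteMeasure ρ ∧ HasDensity γ ρ q := by
  set ρ : Measure Ω := ∑ i, (γ i).totalVariation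
  have hac : ∀ i, γ i ≪ᵥ ρ.toENNRealVectorMeasure := fun i => by
    rw [SignedMeasure.absolutelyContinuous_ennreal_iff,
      VectorMeasure.ennrealToMeasure_toENNRealVectorMeasure]
    refine Measure.AbsolutelyContinuous.mk fun A _ hA => ?_
    simp only [ρ, Measure.coe_finsetSum, Finset.sum_apply, Finset.sum_eq_zero_iff] at hA
    exact hA i (Finset.mem_univ i)
  refine ⟨ρ, fun s i => (γ i).rnDeriv ρ s, inferInstance,
    ⟨measurable_pi_lambda _ fun i => SignedMeasure.measurable_rnDeriv _ _,
      Integrable.of_eval fun i => SignedMeasure.integrable_rnDeriv _ _, fun i A hA => ?_⟩⟩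
  conv_lhs => rw [← SignedMeasure.withDensityᵥ_rnDeriv_eq (γ i) ρ (hac i)]
  exact withDensityᵥ_apply (SignedMeasure.integrable_rnDeriv _ _) hA

namespace HasDensity

variable {γ : Fin n → SignedMeasure Ω} {ρ : Measure Ω} {q : Ω → Fin n → ℝ}

theorem vec_eq_setIntegral (h : HasDensity γ ρ q) {A : Set Ω} (hA : MeasurableSet A) :
    (fun i => γ i A) = ∫ s in A, q s ∂ρ :=
  funext fun i => by
    rw [eval_integral (fun i => (h.integrable.eval i).integrableOn), h.apply_eq i A hA]

theorem map_eq_setIntegral (h : HasDensity γ ρ q) (L : StrongDual ℝ (Fin n → ℝ)) {A : Set Ω}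
    (hA : MeasurableSet A) : L (fun i => γ i A) = ∫ s in A, L (q s) ∂ρ := by
  rw [h.vec_eq_setIntegral hA, L.integral_comp_comm h.integrable.integrableOn]

theorem map_le_supportFun (h : HasDensity γ ρ q) (L : StrongDual ℝ (Fin n → ℝ)) {A : Set Ω}
    (hA : MeasurableSet A) : L (fun i => γ i A) ≤ supportFun ρ q L := by
  rw [h.map_eq_setIntegral L hA]
  exact setIntegral_le_integral_max_zero (L.integrable_comp h.integrable) A

theorem measurableSet_pos (h : HasDensity γ ρ q) (L : StrongDual ℝ (Fin n → ℝ)) :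
    MeasurableSet {s | 0 < L (q s)} :=
  measurableSet_lt measurable_const (L.measurable.comp h.measurable)

theorem measurableSet_eq_zero (h : HasDensity γ ρ q) (L : StrongDual ℝ (Fin n → ℝ)) :
    MeasurableSet {s | L (q s) = 0} :=
  measurableSet_eq_fun (L.measurable.comp h.measurable) measurable_const

theorem map_posSet_eq_supportFun (h : HasDensity γ ρ q) (L : StrongDual ℝ (Fin n → ℝ)) :
    L (fun i => γ i {s | 0 < L (q s)}) = supportFun ρ q L := by
  rw [h.map_eq_setIntegral L (h.measurableSet_pos L), supportFun,
    integral_max_zero_eq_setIntegral_pos (F := fun s => L (q s)) (L.measurable.comp h.measurable)]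

theorem map_le_supportFun_of_mem_lorenzHull (h : HasDensity γ ρ q) {x : Fin n → ℝ}
    (hx : x ∈ lorenzHull γ) (L : StrongDual ℝ (Fin n → ℝ)) : L x ≤ supportFun ρ q L := by
  refine convexHull_min ?_ (convex_halfSpace_le L.toLinearMap.isLinear _) hx
  rintro _ ⟨A, hA, rfl⟩
  exact h.map_le_supportFun L hA

theorem supportFun_mono {Ω' : Type*} [MeasurableSpace Ω'] {γ' : Fin n → SignedMeasure Ω'}
    {ρ' : Measure Ω'} {q' : Ω' → Fin n → ℝ} (h : HasDensity γ ρ q) (h' : HasDensity γ' ρ' q')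
    (hsub : lorenzHull γ ⊆ lorenzHull γ') (L : StrongDual ℝ (Fin n → ℝ)) :
    supportFun ρ q L ≤ supportFun ρ' q' L := by
  rw [← h.map_posSet_eq_supportFun L]
  exact h'.map_le_supportFun_of_mem_lorenzHull
    (hsub (subset_convexHull ℝ _ ⟨_, h.measurableSet_pos L, rfl⟩)) L

theorem restrict (h : HasDensity γ ρ q) {W : Set Ω} (hW : MeasurableSet W) :
    HasDensity (fun i => (γ i).restrict W) ρ (W.indicator q) where
  measurable := h.measurable.indicator hW
  integrable := h.integrable.indicator hW
  apply_eq i A hA := by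
    rw [VectorMeasure.restrict_apply _ hW hA, h.apply_eq i _ (hA.inter hW),
      ← setIntegral_indicator hW]
    congr 1 with s
    by_cases hs : s ∈ W <;> simp [hs]

/-- Testing `N • L + M` and letting `N → ∞` isolates the face of `LH(γ)` exposed by `L`. -/
theorem map_sub_le_supportFun_indicator (h : HasDensity γ ρ q) {x : Fin n → ℝ}
    (hx : ∀ M, M x ≤ supportFun ρ q M) {L : StrongDual ℝ (Fin n → ℝ)}
    (hL : L x = supportFun ρ q L) (M : StrongDual ℝ (Fin n → ℝ)) :
    M (x - fun i => γ i {s | 0 < L (q s)}) ≤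
      supportFun ρ ({s | L (q s) = 0}.indicator q) M := by
  have hlim := tendsto_integral_max_mul_add_sub (F := fun s => L (q s))
    (L.measurable.comp h.measurable)
    (L.integrable_comp h.integrable) (M.integrable_comp h.integrable)
  have hstep : ∀ N : ℕ, M x ≤
      ∫ s, max (N * L (q s) + M (q s)) 0 ∂ρ - N * ∫ s, max (L (q s)) 0 ∂ρ := fun N => by
    have := hx ((N : ℝ) • L + M)
    simp only [hL, supportFun, add_apply, smul_apply, smul_eq_mul] at this
    linarith
  rw [map_sub, h.map_eq_setIntegral M (h.measurableSet_pos L),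
    supportFun_indicator _ _ _ (h.measurableSet_eq_zero L)]
  linarith [ge_of_tendsto' hlim hstep]

theorem finrank_span_vectorRange_restrict_lt (h : HasDensity γ ρ q)
    {L : StrongDual ℝ (Fin n → ℝ)} {A : Set Ω} (hA : MeasurableSet A)
    (hLA : L (fun i => γ i A) ≠ 0) :
    Module.finrank ℝ (Submodule.span ℝ
        (vectorRange fun i => (γ i).restrict {s | L (q s) = 0})) <
      Module.finrank ℝ (Submodule.span ℝ (vectorRange γ)) := by
  have hW := h.measurableSet_eq_zero L
  have hsub : vectorRange (fun i => (γ i).restrict {s | L (q s) = 0}) ⊆ vectorRange γ := by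
    rintro _ ⟨B, hB, rfl⟩
    exact ⟨B ∩ _, hB.inter hW, funext fun i => VectorMeasure.restrict_apply _ hW hB⟩
  have hker : Submodule.span ℝ (vectorRange fun i => (γ i).restrict {s | L (q s) = 0}) ≤
      LinearMap.ker (L : (Fin n → ℝ) →ₗ[ℝ] ℝ) := by
    refine Submodule.span_le.mpr ?_
    rintro _ ⟨B, hB, rfl⟩
    have hzero : ∀ s, L ({s | L (q s) = 0}.indicator q s) = 0 := fun s => by
      by_cases hs : s ∈ {s | L (q s) = 0}
      · rwa [Set.indicator_of_mem hs]
      · rw [Set.indicator_of_notMem hs, map_zero]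
    simp [(h.restrict hW).map_eq_setIntegral L hB, hzero]
  refine Submodule.finrank_lt_finrank_of_lt
    (lt_of_le_of_ne (Submodule.span_mono hsub) fun heq => hLA ?_)
  exact hker (heq ▸ Submodule.subset_span ⟨A, hA, rfl⟩)

/-- A point outside `LH(γ)` is weakly separated from it by some `L` that is not constant on it;
the support inequalities force `x` onto the face of `LH(γ)` exposed by `L`, which is a translate
of the Lorenz hull of `γ` restricted to `{L ∘ q = 0}`, of smaller dimension. -/
theorem mem_lorenzHull (h : HasDensity γ ρ q) {x : Fin n → ℝ}
    (hx : ∀ L, L x ≤ supportFun ρ q L) : x ∈ lorenzHull γ := by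
  induction hd : Module.finrank ℝ (Submodule.span ℝ (vectorRange γ)) using Nat.strong_induction_on
    generalizing γ q x with
  | _ d ih =>
  by_contra hxγ
  obtain ⟨L, hle, y, hy, hlt⟩ :=
    (convex_convexHull ℝ _).exists_forall_le_exists_lt_of_notMem (zero_mem_lorenzHull γ) hxγ
  have hP := h.measurableSet_pos L
  have hLx : L x = supportFun ρ q L :=
    (hx L).antisymm (h.map_posSet_eq_supportFun L ▸ hle _ (subset_convexHull ℝ _ ⟨_, hP, rfl⟩))
  obtain ⟨A, hA, hLA⟩ : ∃ A, MeasurableSet A ∧ L (fun i => γ i A) ≠ 0 := by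
    by_contra! hL0
    have hker : lorenzHull γ ⊆ LinearMap.ker (L : (Fin n → ℝ) →ₗ[ℝ] ℝ) :=
      convexHull_min (by rintro _ ⟨A, hA, rfl⟩; exact hL0 A hA) (Submodule.convex _)
    have hLy : L y = 0 := hker hy
    rw [hLy, hLx, ← h.map_posSet_eq_supportFun, hL0 _ hP] at hlt
    exact hlt.false
  have hface := ih _ (hd ▸ h.finrank_span_vectorRange_restrict_lt hA hLA)
    (h.restrict (h.measurableSet_eq_zero L)) (h.map_sub_le_supportFun_indicator hx hLx) rfl
  have hdisj : Disjoint {s | 0 < L (q s)} {s | L (q s) = 0} :=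
    Set.disjoint_left.mpr fun s hs hs' => hs.ne' hs'
  refine hxγ ?_
  simpa using lorenzHull_restrict_vadd_subset γ hP (h.measurableSet_eq_zero L) hdisj
    (Set.vadd_mem_vadd_set hface)

end HasDensity

section Product

variable {S T S' : Type*} [MeasurableSpace S] [MeasurableSpace T] [MeasurableSpace S']
  {μ : Measure S} {ν : Measure T} [SFinite μ] [SFinite ν]

theorem HasDensity.prod {α : Fin n → SignedMeasure S} {β : Fin n → SignedMeasure T}
    {ω : Fin n → SignedMeasure (S × T)} {g : S → Fin n → ℝ} {k : T → Fin n → ℝ}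
    (hα : HasDensity α μ g) (hβ : HasDensity β ν k)
    (hω : ∀ i A B, MeasurableSet A → MeasurableSet B → ω i (A ×ˢ B) = α i A * β i B) :
    HasDensity ω (μ.prod ν) (fun p => g p.1 * k p.2) where
  measurable := (hα.measurable.comp measurable_fst).mul (hβ.measurable.comp measurable_snd)
  integrable := hα.integrable.mul_prod hβ.integrable
  apply_eq i := by
    show ∀ C, MeasurableSet C → ω i C = ∫ p in C, g p.1 i * k p.2 i ∂(μ.prod ν)
    have hint : Integrable (fun p : S × T => g p.1 i * k p.2 i) (μ.prod ν) :=
      (hα.integrable.eval i).mul_prod (hβ.integrable.eval i)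
    have hrect : ∀ A B, MeasurableSet A → MeasurableSet B →
        ω i (A ×ˢ B) = ∫ p in A ×ˢ B, g p.1 i * k p.2 i ∂(μ.prod ν) := fun A B hA hB => by
      rw [hω i A B hA hB, hα.apply_eq i A hA, hβ.apply_eq i B hB, ← Measure.prod_restrict]
      exact (integral_prod_mul (fun s => g s i) (fun t => k t i)).symm
    refine MeasurableSpace.induction_on_inter generateFrom_prod.symm isPiSystem_prod
      (by simp) ?_ (fun C hC hCeq => ?_) (fun C hdisj hC hCeq => ?_)
    · rintro _ ⟨A, hA, B, hB, rfl⟩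
      exact hrect A B hA hB
    · have huniv := hrect Set.univ Set.univ .univ .univ
      rw [Set.univ_prod_univ, Measure.restrict_univ] at huniv
      have hsplit := (ω i).of_union disjoint_compl_right hC hC.compl
      rw [Set.union_compl_self] at hsplit
      linarith [integral_add_compl hC hint]
    · rw [(ω i).of_disjoint_iUnion hC hdisj, integral_iUnion hC hdisj hint.integrableOn]
      exact tsum_congr hCeq

theorem supportFun_prod_comm (g : S → Fin n → ℝ) (k : T → Fin n → ℝ)
    (L : StrongDual ℝ (Fin n → ℝ)) :
    supportFun (μ.prod ν) (fun p => g p.1 * k p.2) L =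
      supportFun (ν.prod μ) (fun p => k p.1 * g p.2) L := by
  simp only [supportFun, ← integral_prod_swap (μ := ν) (ν := μ), Prod.fst_swap, Prod.snd_swap,
    mul_comm]

theorem HasDensity.supportFun_prod_mono_left {α : Fin n → SignedMeasure S}
    {α' : Fin n → SignedMeasure S'} {μ' : Measure S'} [SFinite μ'] {g : S → Fin n → ℝ}
    {g' : S' → Fin n → ℝ} {k : T → Fin n → ℝ} (hα : HasDensity α μ g)
    (hα' : HasDensity α' μ' g') (hsub : lorenzHull α ⊆ lorenzHull α') (hk : Integrable k ν)
    (L : StrongDual ℝ (Fin n → ℝ)) :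
    supportFun (μ.prod ν) (fun p => g p.1 * k p.2) L ≤
      supportFun (μ'.prod ν) (fun p => g' p.1 * k p.2) L := by
  have hint := (L.integrable_comp (hα.integrable.mul_prod hk)).pos_part
  have hint' := (L.integrable_comp (hα'.integrable.mul_prod hk)).pos_part
  rw [supportFun, supportFun, integral_prod_symm _ hint, integral_prod_symm _ hint']
  refine integral_mono hint.integral_prod_right hint'.integral_prod_right fun t => ?_
  exact hα.supportFun_mono hα' hsub (L.comp ((ContinuousLinearMap.mul ℝ (Fin n → ℝ)).flip (k t)))

end Product

end LorenzHull

theorem lorenzHull_product_mono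
    {n : ℕ} {S S' T T' : Type*}
    [MeasurableSpace S] [MeasurableSpace S'] [MeasurableSpace T] [MeasurableSpace T']
    (α : Fin n → SignedMeasure S) (α' : Fin n → SignedMeasure S')
    (β : Fin n → SignedMeasure T) (β' : Fin n → SignedMeasure T')
    (ω : Fin n → SignedMeasure (S × T))
    (hω : ∀ i A B, MeasurableSet A → MeasurableSet B →
      ω i (A ×ˢ B) = α i A * β i B)
    (ω' : Fin n → SignedMeasure (S' × T'))
    (hω' : ∀ i A B, MeasurableSet A → MeasurableSet B →
      ω' i (A ×ˢ B) = α' i A * β' i B)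
    (hα : lorenzHull α ⊆ lorenzHull α') (hβ : lorenzHull β ⊆ lorenzHull β') :
    lorenzHull ω ⊆ lorenzHull ω' := by
  obtain ⟨μ, g, _, hg⟩ := exists_hasDensity α
  obtain ⟨μ', g', _, hg'⟩ := exists_hasDensity α'
  obtain ⟨ν, k, _, hk⟩ := exists_hasDensity β
  obtain ⟨ν', k', _, hk'⟩ := exists_hasDensity β'
  intro x hx
  refine (hg'.prod hk' hω').mem_lorenzHull fun L => ?_
  calc L x ≤ supportFun (μ.prod ν) (fun p => g p.1 * k p.2) L :=
        (hg.prod hk hω).map_le_supportFun_of_mem_lorenzHull hx L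
    _ ≤ supportFun (μ'.prod ν) (fun p => g' p.1 * k p.2) L :=
        hg.supportFun_prod_mono_left hg' hα hk.integrable L
    _ = supportFun (ν.prod μ') (fun p => k p.1 * g' p.2) L := supportFun_prod_comm _ _ L
    _ ≤ supportFun (ν'.prod μ') (fun p => k' p.1 * g' p.2) L :=
        hk.supportFun_prod_mono_left hk' hβ hg'.integrable L
    _ = supportFun (μ'.prod ν') (fun p => g' p.1 * k' p.2) L := (supportFun_prod_comm _ _ L).symm
end

section
/- For an n-dimensional finite signed vector measure α on (S, F), the Lorenz hull of α equals the set of all vector integrals { ∫_S f dα : f : S → [0,1] measurable }, where ∫_S f dα := (∫ f dα₁, …, ∫ f dαₙ). -/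
open MeasureTheory

/-- Integral of a real function against a finite signed measure, via the
Jordan decomposition. -/
noncomputable def sintegral {S : Type*} [MeasurableSpace S]
    (α : MeasureTheory.SignedMeasure S) (f : S → ℝ) : ℝ :=
  (∫ s, f s ∂α.toJordanDecomposition.posPart)
    - ∫ s, f s ∂α.toJordanDecomposition.negPart

/-!
Dominating all `αᵢ` by one finite measure `μ` turns the theorem into a statement about an integrable
`G : S → E` with `E` finite-dimensional: the integrals `∫ f • G` over measurable `f : S → [0, 1]`
form the convex hull of the set integrals `∫_A G`. They form a convex set containing those, so the
point is that `x = ∫ f • G` lies in the hull. Otherwise some nonzero functional `φ` attains its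
maximum over the hull at `x`. Comparing with the set integral over `P = {φ ∘ G > 0}` gives
`∫ f (φ ∘ G) = ∫_P φ ∘ G`, which forces `f = 1` a.e. on `P` and `f = 0` a.e. where `φ ∘ G < 0`.
Hence `x = ∫_P G + ∫ f • 1_Z G` with `Z = {φ ∘ G = 0}`; the function `1_Z G` takes values in
`ker φ`, so by induction on the dimension the last integral lies in the hull of the set integrals
of `1_Z G`, and translating by `∫_P G` puts `x` in the original hull after all.
-/

open Set Module
open scoped Pointwise

theorem Convex.exists_ne_zero_forall_le_of_notMem {E : Type*} [NormedAddCommGroup E]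
    [NormedSpace ℝ E] [FiniteDimensional ℝ E] {C : Set E} (hC : Convex ℝ C) (hne : C.Nonempty)
    {x : E} (hx : x ∉ C) : ∃ φ : StrongDual ℝ E, φ ≠ 0 ∧ ∀ c ∈ C, φ c ≤ φ x := by
  by_cases hint : (interior C).Nonempty
  · exact geometric_hahn_banach_of_nonempty_interior_point hC (fun h => hx (interior_subset h))
      hint
  obtain ⟨c₀, hc₀⟩ := hne
  have hdir : vectorSpan ℝ C ≠ ⊤ := by
    rwa [Ne, ← direction_affineSpan,
      AffineSubspace.direction_eq_top_iff_of_nonempty ⟨c₀, subset_affineSpan ℝ C hc₀⟩,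
      ← hC.interior_nonempty_iff_affineSpan_eq_top]
  obtain ⟨φ, hφ0, hφ⟩ := Submodule.exists_dual_map_eq_bot_of_lt_top hdir.lt_top inferInstance
  have hconst : ∀ c ∈ C, φ c = φ c₀ := fun c hc => by
    have := Submodule.mem_map_of_mem (f := φ) (vsub_mem_vectorSpan ℝ hc hc₀)
    rwa [hφ, Submodule.mem_bot, vsub_eq_sub, map_sub, sub_eq_zero] at this
  rcases le_total (φ c₀) (φ x) with h | h
  · exact ⟨LinearMap.toContinuousLinearMap φ, by simpa using hφ0,
      fun c hc => by simp [hconst c hc, h]⟩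
  · exact ⟨-LinearMap.toContinuousLinearMap φ, by simpa using hφ0,
      fun c hc => by simp [hconst c hc, h]⟩

section VectorIntegrals

variable {S E F : Type*} [MeasurableSpace S] {μ : Measure S}
  [NormedAddCommGroup E] [NormedSpace ℝ E] [NormedAddCommGroup F] [NormedSpace ℝ F]

def setIntegralRange (μ : Measure S) (G : S → E) : Set E :=
  {x | ∃ A, MeasurableSet A ∧ x = ∫ s in A, G s ∂μ}

theorem zero_mem_setIntegralRange (G : S → E) : (0 : E) ∈ setIntegralRange μ G :=
  ⟨∅, .empty, by simp⟩

theorem ContinuousLinearMap.image_setIntegralRange [CompleteSpace E] [CompleteSpace F]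
    (L : E →L[ℝ] F) {G : S → E} (hG : Integrable G μ) :
    L '' setIntegralRange μ G = setIntegralRange μ (fun s => L (G s)) := by
  ext x
  simp only [setIntegralRange, mem_image, mem_ofPred_eq]
  constructor
  · rintro ⟨_, ⟨A, hA, rfl⟩, rfl⟩
    exact ⟨A, hA, (L.integral_comp_comm hG.integrableOn).symm⟩
  · rintro ⟨A, hA, rfl⟩
    exact ⟨_, ⟨A, hA, rfl⟩, (L.integral_comp_comm hG.integrableOn).symm⟩

theorem setIntegral_vadd_setIntegralRange_indicator_subset {G : S → E} (hG : Integrable G μ)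
    {P Z : Set S} (hP : MeasurableSet P) (hZ : MeasurableSet Z) (hPZ : Disjoint P Z) :
    (∫ s in P, G s ∂μ) +ᵥ setIntegralRange μ (Z.indicator G) ⊆ setIntegralRange μ G := by
  rintro _ ⟨_, ⟨A, hA, rfl⟩, rfl⟩
  refine ⟨P ∪ (A ∩ Z), hP.union (hA.inter hZ), ?_⟩
  rw [setIntegral_union (hPZ.mono_right inter_subset_right) (hA.inter hZ) hG.integrableOn
    hG.integrableOn, setIntegral_indicator hZ]
  rfl

theorem MeasureTheory.Integrable.smul_of_mem_Icc {G : S → E} (hG : Integrable G μ)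
    {f : S → ℝ} (hfm : Measurable f) (hf : ∀ s, f s ∈ Icc (0 : ℝ) 1) :
    Integrable (fun s => f s • G s) μ :=
  hG.bdd_smul 1 hfm.aestronglyMeasurable
    (.of_forall fun s => by rw [Real.norm_of_nonneg (hf s).1]; exact (hf s).2)

theorem ContinuousLinearMap.integral_smul_mem_convexHull_comp [CompleteSpace E]
    [CompleteSpace F] (L : E →L[ℝ] F) {G : S → E} (hG : Integrable G μ) {f : S → ℝ}
    (hfG : Integrable (fun s => f s • G s) μ)
    (h : ∫ s, f s • G s ∂μ ∈ convexHull ℝ (setIntegralRange μ G)) :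
    ∫ s, f s • L (G s) ∂μ ∈ convexHull ℝ (setIntegralRange μ fun s => L (G s)) := by
  have himage := (L : E →ₗ[ℝ] F).image_convexHull (setIntegralRange μ G)
  rw [L.coe_coe] at himage
  rw [← L.image_setIntegralRange hG, ← himage]
  simp_rw [← L.map_smul]
  rw [L.integral_comp_comm hfG]
  exact mem_image_of_mem _ h

theorem ae_eq_one_and_eq_zero_of_setIntegral_pos_le {h f : S → ℝ} (hh : Integrable h μ)
    (hhm : Measurable h) (hfm : Measurable f) (hf : ∀ s, f s ∈ Icc (0 : ℝ) 1)
    (hle : ∫ s in {s | 0 < h s}, h s ∂μ ≤ ∫ s, f s • h s ∂μ) :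
    ∀ᵐ s ∂μ, (0 < h s → f s = 1) ∧ (h s < 0 → f s = 0) := by
  set P := {s | 0 < h s}
  have hP : MeasurableSet P := measurableSet_lt measurable_const hhm
  set ψ := fun s => P.indicator h s - f s • h s
  have hψ : 0 ≤ ψ := fun s => by
    by_cases hs : 0 < h s
    · simp only [ψ, indicator_of_mem (show s ∈ P from hs), smul_eq_mul, Pi.zero_apply]
      nlinarith [(hf s).2]
    · simp only [ψ, indicator_of_notMem (show s ∉ P from hs), smul_eq_mul, Pi.zero_apply]
      nlinarith [(hf s).1]
  have hψi : Integrable ψ μ := (hh.indicator hP).sub (hh.smul_of_mem_Icc hfm hf)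
  have hψ0 : ∫ s, ψ s ∂μ = 0 := by
    refine le_antisymm ?_ (integral_nonneg hψ)
    rw [integral_sub (hh.indicator hP) (hh.smul_of_mem_Icc hfm hf), integral_indicator hP]
    linarith
  filter_upwards [(integral_eq_zero_iff_of_nonneg hψ hψi).mp hψ0] with s hs
  simp only [ψ, Pi.zero_apply, sub_eq_zero, smul_eq_mul] at hs
  refine ⟨fun hpos => ?_, fun hneg => ?_⟩
  · rw [indicator_of_mem (show s ∈ P from hpos)] at hs
    exact (mul_eq_right₀ hpos.ne').mp hs.symm
  · rw [indicator_of_notMem (show s ∉ P from hneg.not_gt)] at hs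
    exact (mul_eq_zero.mp hs.symm).resolve_right hneg.ne

theorem integral_smul_eq_setIntegral_pos_add_of_le [CompleteSpace E] (φ : StrongDual ℝ E)
    {G : S → E} (hGm : StronglyMeasurable G) (hG : Integrable G μ) {f : S → ℝ}
    (hfm : Measurable f) (hf : ∀ s, f s ∈ Icc (0 : ℝ) 1)
    (hle : ∫ s in {s | 0 < φ (G s)}, φ (G s) ∂μ ≤ ∫ s, f s • φ (G s) ∂μ) :
    ∫ s, f s • G s ∂μ = ∫ s in {s | 0 < φ (G s)}, G s ∂μ +
      ∫ s, f s • {s | φ (G s) = 0}.indicator G s ∂μ := by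
  have hφG : Measurable fun s => φ (G s) := (φ.continuous.comp_stronglyMeasurable hGm).measurable
  have hP : MeasurableSet {s | 0 < φ (G s)} := measurableSet_lt measurable_const hφG
  have hZ : MeasurableSet {s | φ (G s) = 0} := hφG (measurableSet_singleton 0)
  rw [← integral_indicator hP,
    ← integral_add (hG.indicator hP) ((hG.indicator hZ).smul_of_mem_Icc hfm hf)]
  refine integral_congr_ae ?_
  filter_upwards [ae_eq_one_and_eq_zero_of_setIntegral_pos_le (φ.integrable_comp hG) hφG hfm
    hf hle] with s ⟨hpos, hneg⟩
  rcases lt_trichotomy 0 (φ (G s)) with hs | hs | hs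
  · simp [hs, hs.ne', hpos hs]
  · simp [hs]
  · simp [hs.not_gt, hs.ne, hneg hs]

theorem integral_smul_mem_convexHull_setIntegralRange [FiniteDimensional ℝ E] {G : S → E}
    (hGm : StronglyMeasurable G) (hG : Integrable G μ) {f : S → ℝ} (hfm : Measurable f)
    (hf : ∀ s, f s ∈ Icc (0 : ℝ) 1) :
    ∫ s, f s • G s ∂μ ∈ convexHull ℝ (setIntegralRange μ G) := by
  induction hd : finrank ℝ E using Nat.strong_induction_on generalizing E with
  | _ d ih =>
  by_contra hx
  obtain ⟨φ, hφ0, hφ⟩ := (convex_convexHull ℝ _).exists_ne_zero_forall_le_of_notMem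
    ⟨0, subset_convexHull ℝ _ (zero_mem_setIntegralRange G)⟩ hx
  set P := {s | 0 < φ (G s)}
  set Z := {s | φ (G s) = 0}
  have hφG : Measurable fun s => φ (G s) := (φ.continuous.comp_stronglyMeasurable hGm).measurable
  have hP : MeasurableSet P := measurableSet_lt measurable_const hφG
  have hZ : MeasurableSet Z := hφG (measurableSet_singleton 0)
  have hPx : ∫ s in P, φ (G s) ∂μ ≤ ∫ s, f s • φ (G s) ∂μ := by
    have := hφ _ (subset_convexHull ℝ _ ⟨P, hP, rfl⟩)
    simpa only [← φ.integral_comp_comm hG.integrableOn,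
      ← φ.integral_comp_comm (hG.smul_of_mem_Icc hfm hf), map_smul] using this
  set K := LinearMap.ker (φ : E →ₗ[ℝ] ℝ)
  have hK : finrank ℝ K < d := hd ▸ Submodule.finrank_lt fun h =>
    hφ0 (ContinuousLinearMap.coe_injective (LinearMap.ker_eq_top.1 h))
  let G' : S → K := fun s => ⟨Z.indicator G s, by
    by_cases hs : s ∈ Z
    · rw [indicator_of_mem hs]; exact hs
    · rw [indicator_of_notMem hs]; exact K.zero_mem⟩
  have hG'm : StronglyMeasurable G' :=
    (Embedding.comp_stronglyMeasurable_iff Topology.IsEmbedding.subtypeVal).1 (hGm.indicator hZ)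
  have hG' : Integrable G' μ :=
    (integrable_norm_iff hG'm.aestronglyMeasurable).1 (hG.indicator hZ).norm
  have hmem : ∫ s, f s • Z.indicator G s ∂μ ∈
      convexHull ℝ (setIntegralRange μ (Z.indicator G)) :=
    K.subtypeL.integral_smul_mem_convexHull_comp hG' (hG'.smul_of_mem_Icc hfm hf)
      (ih _ hK hG'm hG' rfl)
  refine hx (convexHull_mono (setIntegral_vadd_setIntegralRange_indicator_subset hG hP hZ ?_) ?_)
  · exact disjoint_left.2 fun s (hs : 0 < _) (hs' : _ = 0) => hs.ne' hs'
  · rw [convexHull_vadd, integral_smul_eq_setIntegral_pos_add_of_le φ hGm hG hfm hf hPx]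
    exact vadd_mem_vadd_set hmem

theorem convex_setOf_eq_integral_smul [CompleteSpace E] {G : S → E} (hG : Integrable G μ) :
    Convex ℝ {x | ∃ f : S → ℝ, Measurable f ∧ (∀ s, f s ∈ Icc (0 : ℝ) 1) ∧
      x = ∫ s, f s • G s ∂μ} := by
  rintro _ ⟨f₁, hf₁m, hf₁, rfl⟩ _ ⟨f₂, hf₂m, hf₂, rfl⟩ a b ha hb hab
  refine ⟨fun s => a * f₁ s + b * f₂ s, (hf₁m.const_mul a).add (hf₂m.const_mul b),
    fun s => convex_Icc 0 1 (hf₁ s) (hf₂ s) ha hb hab, ?_⟩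
  simp_rw [add_smul, mul_smul]
  rw [integral_add (f := fun s => a • f₁ s • G s) (g := fun s => b • f₂ s • G s)
    ((hG.smul_of_mem_Icc hf₁m hf₁).smul a) ((hG.smul_of_mem_Icc hf₂m hf₂).smul b),
    integral_smul, integral_smul]

theorem convexHull_setIntegralRange_eq [FiniteDimensional ℝ E] {G : S → E}
    (hGm : StronglyMeasurable G) (hG : Integrable G μ) :
    convexHull ℝ (setIntegralRange μ G) =
      {x | ∃ f : S → ℝ, Measurable f ∧ (∀ s, f s ∈ Icc (0 : ℝ) 1) ∧
        x = ∫ s, f s • G s ∂μ} := by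
  refine Subset.antisymm (convexHull_min ?_ (convex_setOf_eq_integral_smul hG)) ?_
  · rintro _ ⟨A, hA, rfl⟩
    refine ⟨A.indicator 1, measurable_one.indicator hA, fun s =>
      ⟨indicator_nonneg (fun _ _ => zero_le_one) s, indicator_le_self' (fun _ _ => zero_le_one) s⟩,
      ?_⟩
    simp_rw [← indicator_smul_apply_left, Pi.one_apply, one_smul]
    rw [integral_indicator hA]
  · rintro _ ⟨f, hfm, hf, rfl⟩
    exact integral_smul_mem_convexHull_setIntegralRange hGm hG hfm hf

end VectorIntegrals

namespace MeasureTheory.SignedMeasure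

variable {S : Type*} [MeasurableSpace S] {μ : Measure S} [SigmaFinite μ]

theorem apply_eq_setIntegral_rnDeriv (β : SignedMeasure S) (hβ : β.totalVariation ≪ μ)
    {A : Set S} (hA : MeasurableSet A) : β A = ∫ s in A, β.rnDeriv μ s ∂μ := by
  rw [← withDensityᵥ_apply (integrable_rnDeriv β μ) hA, withDensityᵥ_rnDeriv_eq β μ]
  rwa [absolutelyContinuous_ennreal_iff, VectorMeasure.ennrealToMeasure_toENNRealVectorMeasure]

theorem sintegral_eq_integral_mul_rnDeriv (β : SignedMeasure S) (hβ : β.totalVariation ≪ μ)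
    {f : S → ℝ} (hf : Integrable f β.totalVariation) :
    sintegral β f = ∫ s, f s * β.rnDeriv μ s ∂μ := by
  obtain ⟨hpos, hneg⟩ := (totalVariation_absolutelyContinuous_iff β μ).1 hβ
  have hfpos : Integrable f β.toJordanDecomposition.posPart :=
    hf.mono_measure (Measure.le_add_right le_rfl)
  have hfneg : Integrable f β.toJordanDecomposition.negPart :=
    hf.mono_measure (Measure.le_add_left le_rfl)
  rw [sintegral, ← integral_toReal_rnDeriv_mul hpos, ← integral_toReal_rnDeriv_mul hneg,
    ← integral_sub ((integrable_toReal_rnDeriv_mul_iff hpos).2 hfpos)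
      ((integrable_toReal_rnDeriv_mul_iff hneg).2 hfneg)]
  simp only [rnDeriv_def]
  congr 1 with s
  ring

end MeasureTheory.SignedMeasure

theorem lorenzHull_eq_integrals
    {n : ℕ} {S : Type*} [MeasurableSpace S]
    (α : Fin n → SignedMeasure S) :
    lorenzHull α =
      {x | ∃ f : S → ℝ, Measurable f ∧ (∀ s, f s ∈ Set.Icc (0 : ℝ) 1) ∧
        x = fun i => sintegral (α i) f} := by
  obtain ⟨μ, _, hμ⟩ : ∃ μ : Measure S, IsFiniteMeasure μ ∧ ∀ i, (α i).totalVariation ≪ μ :=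
    ⟨∑ i, (α i).totalVariation, inferInstance, fun i => Measure.absolutelyContinuous_of_le
      (Finset.single_le_sum (f := fun j => (α j).totalVariation) (fun _ _ => Measure.zero_le _)
        (Finset.mem_univ i))⟩
  set G : S → Fin n → ℝ := fun s i => (α i).rnDeriv μ s
  have hG : Integrable G μ := Integrable.of_eval fun i => SignedMeasure.integrable_rnDeriv (α i) μ
  have hGm : StronglyMeasurable G :=
    (measurable_pi_lambda _ fun i => SignedMeasure.measurable_rnDeriv (α i) μ).stronglyMeasurable
  have hrange : {x | ∃ A, MeasurableSet A ∧ x = fun i => α i A} = setIntegralRange μ G := by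
    refine Set.ext fun x => exists_congr fun A => and_congr_right fun hA => ?_
    rw [funext fun i => (α i).apply_eq_setIntegral_rnDeriv (hμ i) hA,
      ← funext (eval_integral fun i => (SignedMeasure.integrable_rnDeriv (α i) μ).integrableOn)]
  rw [lorenzHull, hrange, convexHull_setIntegralRange_eq hGm hG]
  refine Set.ext fun x => exists_congr fun f => and_congr_right fun hfm =>
    and_congr_right fun hf => ?_
  have hint : ∫ s, f s • G s ∂μ = fun i => sintegral (α i) f := funext fun i => by
    rw [eval_integral (hG.smul_of_mem_Icc hfm hf).eval, (α i).sintegral_eq_integral_mul_rnDeriv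
      (hμ i) (Integrable.of_mem_Icc 0 1 hfm.aemeasurable (.of_forall hf))]
    rfl
  rw [hint]
end

section
/- Let α = (α₁, …, αₙ) be an n-dimensional finite signed vector measure on (S, F) and let |α| := Σᵢ |αᵢ| be its total variation with respect to the 1-norm. Then the Radon–Nikodym derivative dα/d|α| : S → ℝⁿ satisfies ‖(dα/d|α|)(s)‖₁ = 1 for |α|-almost every s ∈ S. -/
/-!
Write `|α| = ∑ᵢ (αᵢ⁺ + αᵢ⁻)`. The Jordan parts `αᵢ⁺`, `αᵢ⁻` are mutually singular, so
`|α|`-a.e. one of their densities vanishes and `|dαᵢ/d|α|| = d|αᵢ|/d|α|`. Summing over `i`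
gives `d|α|/d|α| = 1`.
-/

open MeasureTheory Filter

namespace MeasureTheory.Measure

variable {S : Type*} [MeasurableSpace S] {μ ν ν₁ ν₂ : Measure S}

lemma ae_rnDeriv_eq_zero_of_restrict_eq_zero [ν.HaveLebesgueDecomposition μ] [SigmaFinite μ]
    {s : Set S} (hs : MeasurableSet s) (h : ν.restrict s = 0) :
    ∀ᵐ x ∂μ, x ∈ s → ν.rnDeriv μ x = 0 := by
  have h_restrict := rnDeriv_restrict ν μ hs
  rw [h] at h_restrict
  filter_upwards [h_restrict, rnDeriv_zero μ] with x hx hx_zero hxs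
  rw [← Set.indicator_of_mem hxs (ν.rnDeriv μ), ← hx, hx_zero, Pi.zero_apply]

lemma MutuallySingular.ae_rnDeriv_eq_zero_or_eq_zero [ν₁.HaveLebesgueDecomposition μ]
    [ν₂.HaveLebesgueDecomposition μ] [SigmaFinite μ] (h : ν₁ ⟂ₘ ν₂) :
    ∀ᵐ x ∂μ, ν₁.rnDeriv μ x = 0 ∨ ν₂.rnDeriv μ x = 0 := by
  filter_upwards [ae_rnDeriv_eq_zero_of_restrict_eq_zero h.measurableSet_nullSet
      h.restrict_nullSet,
    ae_rnDeriv_eq_zero_of_restrict_eq_zero h.measurableSet_nullSet.compl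
      h.restrict_compl_nullSet] with x h₁ h₂
  by_cases hx : x ∈ h.nullSet
  · exact Or.inl (h₁ hx)
  · exact Or.inr (h₂ hx)

lemma rnDeriv_finset_sum {ι : Type*} (s : Finset ι) (ν : ι → Measure S)
    [∀ i, IsFiniteMeasure (ν i)] (μ : Measure S) [SigmaFinite μ] :
    (∑ i ∈ s, ν i).rnDeriv μ =ᵐ[μ] ∑ i ∈ s, (ν i).rnDeriv μ := by
  classical
  induction s using Finset.induction with
  | empty => exact rnDeriv_zero μ
  | insert a s ha ih =>
    rw [Finset.sum_insert ha, Finset.sum_insert ha]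
    exact (rnDeriv_add' (ν a) _ μ).trans (EventuallyEq.rfl.add ih)

end MeasureTheory.Measure

namespace MeasureTheory.SignedMeasure

variable {S : Type*} [MeasurableSpace S]

lemma ae_abs_rnDeriv_eq_toReal_rnDeriv_totalVariation (s : SignedMeasure S) (μ : Measure S)
    [SigmaFinite μ] :
    ∀ᵐ x ∂μ, |s.rnDeriv μ x| = (s.totalVariation.rnDeriv μ x).toReal := by
  filter_upwards [s.toJordanDecomposition.mutuallySingular.ae_rnDeriv_eq_zero_or_eq_zero,
    Measure.rnDeriv_add' s.toJordanDecomposition.posPart s.toJordanDecomposition.negPart μ]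
    with x h_zero h_add
  rw [totalVariation, h_add, Pi.add_apply, rnDeriv_def]
  rcases h_zero with h | h <;> simp [h]

end MeasureTheory.SignedMeasure

theorem rnDeriv_totalVariation_norm_one
    {n : ℕ} {S : Type*} [MeasurableSpace S]
    (α : Fin n → SignedMeasure S) :
    ∀ᵐ s ∂(∑ i, (α i).totalVariation),
      ∑ i, |(α i).rnDeriv (∑ j, (α j).totalVariation) s| = 1 := by
  set μ := ∑ j, (α j).totalVariation
  filter_upwards [ae_all_iff.2 fun i ↦
      (α i).ae_abs_rnDeriv_eq_toReal_rnDeriv_totalVariation μ,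
    ae_all_iff.2 fun i ↦ Measure.rnDeriv_lt_top (α i).totalVariation μ,
    Measure.rnDeriv_finset_sum Finset.univ (fun i ↦ (α i).totalVariation) μ,
    μ.rnDeriv_self] with x h_abs h_fin h_sum h_self
  calc ∑ i, |(α i).rnDeriv μ x|
      = ∑ i, ((α i).totalVariation.rnDeriv μ x).toReal := Finset.sum_congr rfl fun i _ ↦ h_abs i
    _ = (∑ i, (α i).totalVariation.rnDeriv μ x).toReal :=
        (ENNReal.toReal_sum fun i _ ↦ (h_fin i).ne).symm
    _ = (μ.rnDeriv μ x).toReal := by rw [h_sum, Finset.sum_apply]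
    _ = 1 := by rw [h_self, ENNReal.toReal_one]
end
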